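/- Fix k ∈ ℤ, t = t_k⁻, α > 0 and 0 < c ≤ Δ/(4√α). Then for every ξ with ξ₀ + c√α < ξ < ξ₁ − c√α and every η ∈ ℝ with η ≠ η_AVG = ξ̄ − (ln a)/(2π²σ²Δ) (equivalently q(t_k⁻,η) ≠ −1, so that η̂_s(t_k⁻,η) is defined), one has |η̂_s(t_k⁻, η) − ξ| ≥ c√α; that is, the preimage {η : |η̂_s(t_k⁻,η) − ξ| < c√α} is empty. -/
import Mathlib


noncomputable section

open MeasureTheory

/-- `q(t,η) = a·e^{2πiΔt}·e^{2π²σ²Δ(η−ξ̄)}`. -/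
def qFac (ξ₀ ξ₁ a σ t η : ℝ) : ℂ :=
  (a : ℂ) * Complex.exp (2 * Real.pi * Complex.I * (ξ₁ - ξ₀) * t) *
    (Real.exp (2 * Real.pi ^ 2 * σ ^ 2 * (ξ₁ - ξ₀) * (η - (ξ₀ + ξ₁) / 2)) : ℂ)

/-- The synchrosqueezing reassignment rule `η̂_s(t,η) = (ξ₀ + ξ₁·q)/(1 + q)`. -/
def etaS (ξ₀ ξ₁ a σ t η : ℝ) : ℂ :=
  ((ξ₀ : ℂ) + (ξ₁ : ℂ) * qFac ξ₀ ξ₁ a σ t η) / (1 + qFac ξ₀ ξ₁ a σ t η)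

/-- at a destructive time `t_k⁻ = (k+1/2)/Δ`, for `0 < c ≤ Δ/(4√α)` and
`ξ₀ + c√α < ξ < ξ₁ − c√α`, the preimage `{η : |η̂_s(t_k⁻,η) − ξ| < c√α}` is empty: for
every `η ≠ η_AVG` (where `η̂_s` is defined), `|η̂_s(t_k⁻,η) − ξ| ≥ c√α`. -/
theorem stmt19 (ξ₀ ξ₁ a σ α c : ℝ) (hξ : ξ₀ < ξ₁) (ha : 0 < a) (hσ : 0 < σ)
    (hα : 0 < α) (hc : 0 < c) (hc2 : c ≤ (ξ₁ - ξ₀) / (4 * Real.sqrt α)) (k : ℤ)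
    (ξ : ℝ) (hξ1 : ξ₀ + c * Real.sqrt α < ξ) (hξ2 : ξ < ξ₁ - c * Real.sqrt α) :
    ∀ η : ℝ,
      η ≠ (ξ₀ + ξ₁) / 2 - Real.log a / (2 * Real.pi ^ 2 * σ ^ 2 * (ξ₁ - ξ₀)) →
      c * Real.sqrt α ≤
        ‖etaS ξ₀ ξ₁ a σ (((k : ℝ) + 1 / 2) / (ξ₁ - ξ₀)) η - (ξ : ℂ)‖ := by
  intro η hη
  have hD0 : (0:ℝ) < ξ₁ - ξ₀ := by linarith
  have hDne : (ξ₁ - ξ₀ : ℝ) ≠ 0 := ne_of_gt hD0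
  set X : ℝ := 2 * Real.pi ^ 2 * σ ^ 2 * (ξ₁ - ξ₀) * (η - (ξ₀ + ξ₁) / 2) with hXdef
  set r : ℝ := a * Real.exp X with hrdef
  have hr0 : 0 < r := mul_pos ha (Real.exp_pos _)
  have hπ : (0:ℝ) < Real.pi := Real.pi_pos
  have hK0 : (0:ℝ) < 2 * Real.pi ^ 2 * σ ^ 2 * (ξ₁ - ξ₀) := by positivity
  -- r ≠ 1
  have hr1 : r ≠ 1 := by
    intro h
    apply hη
    have hexpX : Real.exp X = 1 / a := by
      field_simp at h ⊢
      linarith [h]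
    have hXval : X = - Real.log a := by
      have := congrArg Real.log hexpX
      rw [Real.log_exp, Real.log_div one_ne_zero (ne_of_gt ha), Real.log_one] at this
      linarith
    have : η - (ξ₀ + ξ₁) / 2 = - Real.log a / (2 * Real.pi ^ 2 * σ ^ 2 * (ξ₁ - ξ₀)) := by
      rw [eq_div_iff (ne_of_gt hK0)]
      rw [hXdef] at hXval
      linarith [hXval]
    rw [neg_div] at this
    linarith [this]
  -- the complex exponential is -1
  have hexp : Complex.exp (2 * Real.pi * Complex.I * (ξ₁ - ξ₀) * ((((k : ℝ) + 1 / 2) / (ξ₁ - ξ₀) : ℝ) : ℂ)) = -1 := by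
    have harg : (2 * Real.pi * Complex.I * (ξ₁ - ξ₀) * ((((k : ℝ) + 1 / 2) / (ξ₁ - ξ₀) : ℝ) : ℂ))
        = (k : ℂ) * (2 * Real.pi * Complex.I) + Real.pi * Complex.I := by
      have hDC : ((ξ₁ : ℂ) - (ξ₀ : ℂ)) ≠ 0 := by
        have : ((ξ₁ - ξ₀ : ℝ) : ℂ) ≠ 0 := by exact_mod_cast hDne
        push_cast at this
        exact this
      push_cast
      field_simp
    rw [harg, Complex.exp_add, Complex.exp_int_mul_two_pi_mul_I, Complex.exp_pi_mul_I]
    ring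
  have hq : qFac ξ₀ ξ₁ a σ (((k : ℝ) + 1 / 2) / (ξ₁ - ξ₀)) η = ((-r : ℝ) : ℂ) := by
    rw [qFac]
    rw [show ((((k : ℝ) + 1 / 2) / (ξ₁ - ξ₀) : ℝ) : ℂ) = ((((k : ℝ) + 1 / 2) / (ξ₁ - ξ₀) : ℝ) : ℂ) from rfl] at hexp
    rw [hexp, hrdef, hXdef]
    push_cast
    ring
  have hden : (1 : ℂ) + ((-r : ℝ) : ℂ) = ((1 - r : ℝ) : ℂ) := by push_cast; ring
  have hdenne : ((1 - r : ℝ) : ℂ) ≠ 0 :=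
    Complex.ofReal_ne_zero.mpr (sub_ne_zero.mpr (Ne.symm hr1))
  have heta : etaS ξ₀ ξ₁ a σ (((k : ℝ) + 1 / 2) / (ξ₁ - ξ₀)) η
      = (((ξ₀ - ξ₁ * r) / (1 - r) : ℝ) : ℂ) := by
    rw [etaS, hq, hden, Complex.ofReal_div]
    congr 1
    push_cast
    ring
  rw [heta]
  have : ((((ξ₀ - ξ₁ * r) / (1 - r) : ℝ)) : ℂ) - (ξ : ℂ) = (((ξ₀ - ξ₁ * r) / (1 - r) - ξ : ℝ) : ℂ) := by
    push_cast; ring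
  rw [this, Complex.norm_real]
  set y : ℝ := (ξ₀ - ξ₁ * r) / (1 - r) with hy
  rcases lt_or_gt_of_ne hr1 with hlt | hgt
  · -- r < 1 : y ≤ ξ₀
    have hyle : y ≤ ξ₀ := by
      rw [hy, div_le_iff₀ (by linarith : (0:ℝ) < 1 - r)]
      nlinarith
    rw [Real.norm_eq_abs]
    exact le_abs.mpr (Or.inr (by linarith))
  · -- r > 1 : ξ₁ ≤ y
    have hyge : ξ₁ ≤ y := by
      rw [hy, le_div_iff_of_neg (by linarith : 1 - r < 0)]
      nlinarith
    rw [Real.norm_eq_abs]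
    exact le_abs.mpr (Or.inl (by linarith))
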